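/- Let n > m > ℓ ≥ 2 be integers and let H = ⟨a, b, c | a^(2^n) = 1, b^(2^m) = a^(2^m), c^(2^ℓ) = 1, [b,a] = c, [c,a] = c^(-2), [c,b] = c^(-2)⟩. Let S be a commutative ring of characteristic 4 with a maximal ideal n satisfying 2 ∈ n and 2 ∉ n². Set A = a − 1, B = b − 1, C = c − 1 in SH and Θ = Δ(SH : n). Then for all α, β ∈ S one has (αA + βB)⁴ ≡ α⁴A⁴ + β⁴B⁴ + α²β²C² (mod Θ⁵). -/

import Mathlib

/-! Put `u = A² + 2A = a² - 1` and `v = B² + 2B = b² - 1`; they commute with `B` and `A`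
respectively because `a²` and `b²` are central in `H`. Squaring
`(αA + βB)² = α²A² + αβ(AB + BA) + β²B²` and substituting `A² = u - 2A`, `B² = v - 2B`, the
relation `4 = 0` turns the coefficients of `α³β` and `αβ³` into `2u(AB + BA)` and `2v(BA + AB)`,
and that of `α²β²` into `2uv + 2(AB·D + D·AB) + D²` with `D = BA - AB = ab·C`. As `2 ∈ Θ`,
`u, v, AB + BA, D ∈ Θ²` and `D ≡ C` modulo `Θ³`, everything except `D² ≡ C²` lies in `Θ⁵`. -/

/-- Relators of the group `H` from the paper:
`H = ⟨a,b,c ∣ a^(2^n) = 1, b^(2^m) = a^(2^m), c^(2^l) = 1, [b,a] = c, [c,a] = c⁻², [c,b] = c⁻²⟩`,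
where `[g,h] = g⁻¹h⁻¹gh`.  Generators: `0 ↦ a`, `1 ↦ b`, `2 ↦ c`. -/
def hrels (n m l : ℕ) : Set (FreeGroup (Fin 3)) :=
  {FreeGroup.of 0 ^ 2 ^ n, FreeGroup.of 1 ^ 2 ^ m * (FreeGroup.of 0 ^ 2 ^ m)⁻¹,
   FreeGroup.of 2 ^ 2 ^ l,
   (FreeGroup.of 1)⁻¹ * (FreeGroup.of 0)⁻¹ * FreeGroup.of 1 * FreeGroup.of 0 * (FreeGroup.of 2)⁻¹,
   (FreeGroup.of 2)⁻¹ * (FreeGroup.of 0)⁻¹ * FreeGroup.of 2 * FreeGroup.of 0 * FreeGroup.of 2 ^ 2,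
   (FreeGroup.of 2)⁻¹ * (FreeGroup.of 1)⁻¹ * FreeGroup.of 2 * FreeGroup.of 1 * FreeGroup.of 2 ^ 2}

/-- The group `H` of the paper. -/
def GrpH (n m l : ℕ) : Type := PresentedGroup (hrels n m l)

instance (n m l : ℕ) : Group (GrpH n m l) := by unfold GrpH; infer_instance

/-- The augmentation map `ε : SH → S`, sending `Σ α_h h` to `Σ α_h`. -/
noncomputable def aug (S : Type) [CommRing S] (G : Type) [Group G] :
    MonoidAlgebra S G →ₐ[S] S := MonoidAlgebra.lift S S G 1

/-- The relative augmentation ideal `Δ(SG : n) = ε⁻¹(n) = {x ∈ SG : ε(x) ∈ n}`. -/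
noncomputable def relAugIdeal (S : Type) [CommRing S] (nn : Ideal S) (G : Type) [Group G] :
    Ideal (MonoidAlgebra S G) := Ideal.comap (aug S G) nn

/-- `A = a - 1 ∈ SH`. -/
noncomputable def elA (S : Type) [CommRing S] (n m l : ℕ) : MonoidAlgebra S (GrpH n m l) :=
  MonoidAlgebra.of S (GrpH n m l) (PresentedGroup.of 0) - 1
/-- `B = b - 1 ∈ SH`. -/
noncomputable def elB (S : Type) [CommRing S] (n m l : ℕ) : MonoidAlgebra S (GrpH n m l) :=
  MonoidAlgebra.of S (GrpH n m l) (PresentedGroup.of 1) - 1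
/-- `C = c - 1 ∈ SH`. -/
noncomputable def elC (S : Type) [CommRing S] (n m l : ℕ) : MonoidAlgebra S (GrpH n m l) :=
  MonoidAlgebra.of S (GrpH n m l) (PresentedGroup.of 2) - 1

-- `Ideal R` is not a monoid for noncommutative `R`, hence the detour through `Submodule`.
theorem Ideal.mul_mem_pow_add {R : Type*} [Semiring R] {I : Ideal R} {x y : R} {i j : ℕ}
    (hx : x ∈ I ^ i) (hy : y ∈ I ^ j) (hj : j ≠ 0) : x * y ∈ I ^ (i + j) := by
  rw [Submodule.pow_add _ hj]
  exact Submodule.mul_mem_mul hx hy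

theorem Ideal.mul_mem_pow_succ {R : Type*} [Semiring R] {I : Ideal R} {x y : R} {j : ℕ}
    (hx : x ∈ I) (hy : y ∈ I ^ j) (hj : j ≠ 0) : x * y ∈ I ^ (j + 1) := by
  rw [Submodule.pow_succ' _ hj]
  exact Submodule.mul_mem_mul hx hy

theorem Ideal.mul_mem_pow_two {R : Type*} [Semiring R] {I : Ideal R} {x y : R}
    (hx : x ∈ I) (hy : y ∈ I) : x * y ∈ I ^ 2 := by
  rw [Submodule.pow_succ, Submodule.pow_one]
  exact Submodule.mul_mem_mul hx hy

theorem Ideal.mul_sub_mul_mem_pow_two {R : Type*} [Ring R] {I : Ideal R} {x y : R}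
    (hx : x ∈ I) (hy : y ∈ I) : y * x - x * y ∈ I ^ 2 :=
  sub_mem (Ideal.mul_mem_pow_two hy hx) (Ideal.mul_mem_pow_two hx hy)

theorem Ideal.sq_add_two_mul_mem_pow_two {R : Type*} [Semiring R] {I : Ideal R} {x : R}
    (h2 : (2 : R) ∈ I) (hx : x ∈ I) : x ^ 2 + 2 * x ∈ I ^ 2 :=
  add_mem (sq x ▸ Ideal.mul_mem_pow_two hx hx) (Ideal.mul_mem_pow_two h2 hx)

theorem smul_add_smul_pow_four {S R : Type*} [CommSemiring S] [Semiring R] [Algebra S R]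
    (α β : S) (x y : R) :
    (α • x + β • y) ^ 4 = α ^ 4 • x ^ 4
      + (α ^ 3 * β) • (x ^ 2 * (x * y + y * x) + (x * y + y * x) * x ^ 2)
      + (α ^ 2 * β ^ 2) • (x ^ 2 * y ^ 2 + y ^ 2 * x ^ 2 + (x * y + y * x) ^ 2)
      + (α * β ^ 3) • (y ^ 2 * (y * x + x * y) + (y * x + x * y) * y ^ 2) + β ^ 4 • y ^ 4 := by
  simp only [pow_succ, pow_zero, one_mul, add_mul, mul_add, smul_mul_assoc, mul_smul_comm,
    smul_smul, mul_assoc, smul_add]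
  module

section CharFour

variable {R : Type*} [Ring R] (h4 : (4 : R) = 0) {x y : R}
include h4

theorem sq_mul_anticomm_add_anticomm_mul_sq (h : Commute (x ^ 2 + 2 * x) y) :
    x ^ 2 * (x * y + y * x) + (x * y + y * x) * x ^ 2
      = 2 * (x ^ 2 + 2 * x) * (x * y + y * x) := by
  linear_combination (norm := noncomm_ring)
    -(x * h.eq) - h.eq * x - 2 * h.eq + (x * y - y * x - y * x ^ 2 - x * y * x) * h4

theorem sq_mul_sq_add_sq_mul_sq (hu : Commute (x ^ 2 + 2 * x) y)
    (hv : Commute (y ^ 2 + 2 * y) x) :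
    x ^ 2 * y ^ 2 + y ^ 2 * x ^ 2 = 2 * (x ^ 2 + 2 * x) * (y ^ 2 + 2 * y) := by
  linear_combination (norm := noncomm_ring)
    x * hv.eq + hv.eq * x + 2 * hu.eq
      + (y * x + x * y - (x ^ 2 + 2 * x) * y - x * (y ^ 2 + 2 * y)) * h4

theorem anticomm_sq :
    (x * y + y * x) ^ 2
      = (y * x - x * y) ^ 2 + 2 * (x * y * (y * x - x * y) + (y * x - x * y) * (x * y)) := by
  linear_combination (norm := noncomm_ring) (x * y) ^ 2 * h4

theorem sq_mul_anticomm_add_anticomm_mul_sq_mem {I : Ideal R} (h2 : (2 : R) ∈ I)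
    (hx : x ∈ I) (hy : y ∈ I) (h : Commute (x ^ 2 + 2 * x) y) :
    x ^ 2 * (x * y + y * x) + (x * y + y * x) * x ^ 2 ∈ I ^ 5 := by
  rw [sq_mul_anticomm_add_anticomm_mul_sq h4 h, mul_assoc]
  refine Ideal.mul_mem_pow_succ h2 ?_ four_ne_zero
  exact Ideal.mul_mem_pow_add (Ideal.sq_add_two_mul_mem_pow_two h2 hx)
    (add_mem (Ideal.mul_mem_pow_two hx hy) (Ideal.mul_mem_pow_two hy hx)) two_ne_zero

theorem sq_mul_sq_add_sq_mul_sq_add_anticomm_sq_sub_mem {I : Ideal R} (h2 : (2 : R) ∈ I)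
    {z : R} (hx : x ∈ I) (hy : y ∈ I) (hz : z ∈ I ^ 2) (hxyz : y * x - x * y - z ∈ I ^ 3)
    (hu : Commute (x ^ 2 + 2 * x) y) (hv : Commute (y ^ 2 + 2 * y) x) :
    x ^ 2 * y ^ 2 + y ^ 2 * x ^ 2 + (x * y + y * x) ^ 2 - z ^ 2 ∈ I ^ 5 := by
  have hD := Ideal.mul_sub_mul_mem_pow_two hx hy
  have hxy := Ideal.mul_mem_pow_two hx hy
  have hsq_sub : (y * x - x * y) ^ 2 - z ^ 2
      = (y * x - x * y - z) * (y * x - x * y) + z * (y * x - x * y - z) := by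
    noncomm_ring
  rw [sq_mul_sq_add_sq_mul_sq h4 hu hv, anticomm_sq h4, mul_assoc, add_sub_assoc,
    add_sub_right_comm, hsq_sub]
  refine add_mem (Ideal.mul_mem_pow_succ h2 ?_ four_ne_zero) (add_mem (add_mem ?_ ?_)
    (Ideal.mul_mem_pow_succ h2 (add_mem ?_ ?_) four_ne_zero))
  · exact Ideal.mul_mem_pow_add (Ideal.sq_add_two_mul_mem_pow_two h2 hx)
      (Ideal.sq_add_two_mul_mem_pow_two h2 hy) two_ne_zero
  · exact Ideal.mul_mem_pow_add hxyz hD two_ne_zero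
  · exact Ideal.mul_mem_pow_add hz hxyz three_ne_zero
  · exact Ideal.mul_mem_pow_add hxy hD two_ne_zero
  · exact Ideal.mul_mem_pow_add hD hxy two_ne_zero

theorem smul_add_smul_pow_four_sub_mem {S : Type*} [CommRing S] [Algebra S R] {I : Ideal R}
    (h2 : (2 : R) ∈ I) {z : R} (hx : x ∈ I) (hy : y ∈ I) (hz : z ∈ I ^ 2)
    (hxyz : y * x - x * y - z ∈ I ^ 3)
    (hu : Commute (x ^ 2 + 2 * x) y) (hv : Commute (y ^ 2 + 2 * y) x) (α β : S) :
    (α • x + β • y) ^ 4 - (α ^ 4 • x ^ 4 + β ^ 4 • y ^ 4 + (α ^ 2 * β ^ 2) • z ^ 2) ∈ I ^ 5 := by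
  have h31 := sq_mul_anticomm_add_anticomm_mul_sq_mem h4 h2 hx hy hu
  have h13 := sq_mul_anticomm_add_anticomm_mul_sq_mem h4 h2 hy hx hv
  have h22 := sq_mul_sq_add_sq_mul_sq_add_anticomm_sq_sub_mem h4 h2 hx hy hz hxyz hu hv
  rw [smul_add_smul_pow_four]
  convert add_mem (add_mem (Submodule.smul_of_tower_mem _ (α ^ 3 * β) h31)
    (Submodule.smul_of_tower_mem _ (α ^ 2 * β ^ 2) h22))
    (Submodule.smul_of_tower_mem _ (α * β ^ 3) h13) using 1
  module

end CharFour

namespace GrpH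

variable {n m l : ℕ}

abbrev a : GrpH n m l := PresentedGroup.of 0
abbrev b : GrpH n m l := PresentedGroup.of 1
abbrev c : GrpH n m l := PresentedGroup.of 2

theorem b_mul_a : (b : GrpH n m l) * a = a * b * c := by
  have h : (b⁻¹ * a⁻¹ * b * a * c⁻¹ : GrpH n m l) = 1 := PresentedGroup.one_of_mem
    (x := (FreeGroup.of 1)⁻¹ * (FreeGroup.of 0)⁻¹ * FreeGroup.of 1 * FreeGroup.of 0
      * (FreeGroup.of 2)⁻¹)
    (by simp [hrels])
  calc (b : GrpH n m l) * a = a * b * (b⁻¹ * a⁻¹ * b * a * c⁻¹) * c := by group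
    _ = a * b * c := by rw [h]; group

theorem c_mul_a : (c : GrpH n m l) * a = a * c⁻¹ := by
  have h : (c⁻¹ * a⁻¹ * c * a * c ^ 2 : GrpH n m l) = 1 := PresentedGroup.one_of_mem
    (x := (FreeGroup.of 2)⁻¹ * (FreeGroup.of 0)⁻¹ * FreeGroup.of 2 * FreeGroup.of 0
      * FreeGroup.of 2 ^ 2)
    (by simp [hrels])
  calc (c : GrpH n m l) * a = a * c * (c⁻¹ * a⁻¹ * c * a * c ^ 2) * c⁻¹ ^ 2 := by group
    _ = a * c⁻¹ := by rw [h]; group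

theorem c_mul_b : (c : GrpH n m l) * b = b * c⁻¹ := by
  have h : (c⁻¹ * b⁻¹ * c * b * c ^ 2 : GrpH n m l) = 1 := PresentedGroup.one_of_mem
    (x := (FreeGroup.of 2)⁻¹ * (FreeGroup.of 1)⁻¹ * FreeGroup.of 2 * FreeGroup.of 1
      * FreeGroup.of 2 ^ 2)
    (by simp [hrels])
  calc (c : GrpH n m l) * b = b * c * (c⁻¹ * b⁻¹ * c * b * c ^ 2) * c⁻¹ ^ 2 := by group
    _ = b * c⁻¹ := by rw [h]; group

theorem commute_a_sq_b : Commute ((a : GrpH n m l) ^ 2) b := by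
  symm
  calc (b : GrpH n m l) * a ^ 2 = a * b * (c * a) := by rw [sq, ← mul_assoc, b_mul_a]; group
    _ = a * (b * a) * c⁻¹ := by rw [c_mul_a]; group
    _ = a ^ 2 * b := by rw [b_mul_a, sq]; group

theorem commute_b_sq_a : Commute ((b : GrpH n m l) ^ 2) a :=
  calc (b : GrpH n m l) ^ 2 * a = b * (a * b * c) := by rw [sq, mul_assoc, b_mul_a]
    _ = (b * a) * b * c := by group
    _ = a * b * (c * b) * c := by rw [b_mul_a]; group
    _ = a * b ^ 2 := by rw [c_mul_b, sq]; group

end GrpH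

section GroupAlgebra

open MonoidAlgebra

variable {S : Type} [CommRing S] {nn : Ideal S} {G : Type} [Group G]

theorem of_sub_one_mem_relAugIdeal (g : G) : of S G g - 1 ∈ relAugIdeal S nn G := by
  simp [relAugIdeal, aug]

theorem two_mem_relAugIdeal (h2 : (2 : S) ∈ nn) :
    (2 : MonoidAlgebra S G) ∈ relAugIdeal S nn G := by
  rwa [relAugIdeal, Ideal.mem_comap, map_ofNat]

variable {g h k : G}

theorem commute_of_sub_one_sq_add_two_mul (hgh : Commute (g ^ 2) h) :
    Commute ((of S G g - 1) ^ 2 + 2 * (of S G g - 1)) (of S G h - 1) := by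
  have hsq : (of S G g - 1) ^ 2 + 2 * (of S G g - 1) = of S G (g ^ 2) - 1 := by
    rw [map_pow]; noncomm_ring
  rw [hsq]
  exact ((hgh.map (of S G)).sub_left (Commute.one_left _)).sub_right (Commute.one_right _)

variable (hk : h * g = g * h * k)
include hk

theorem of_sub_one_mul_of_sub_one_sub_eq :
    (of S G h - 1) * (of S G g - 1) - (of S G g - 1) * (of S G h - 1)
      = of S G (g * h) * (of S G k - 1) := by
  have hw : of S G h * of S G g = of S G g * of S G h * of S G k := by
    simp only [← map_mul, hk]
  rw [map_mul]
  linear_combination (norm := noncomm_ring) hw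

theorem of_sub_one_mem_relAugIdeal_pow_two : of S G k - 1 ∈ relAugIdeal S nn G ^ 2 := by
  have hk' : of S G k - 1 = of S G (g * h)⁻¹ *
      ((of S G h - 1) * (of S G g - 1) - (of S G g - 1) * (of S G h - 1)) := by
    rw [of_sub_one_mul_of_sub_one_sub_eq hk, ← mul_assoc, ← map_mul, inv_mul_cancel, map_one,
      one_mul]
  rw [hk']
  exact Ideal.mul_mem_left _ _ (Ideal.mul_sub_mul_mem_pow_two (of_sub_one_mem_relAugIdeal g)
    (of_sub_one_mem_relAugIdeal h))

theorem of_sub_one_mul_of_sub_one_sub_sub_mem_pow_three :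
    (of S G h - 1) * (of S G g - 1) - (of S G g - 1) * (of S G h - 1) - (of S G k - 1)
      ∈ relAugIdeal S nn G ^ 3 := by
  rw [of_sub_one_mul_of_sub_one_sub_eq hk, ← sub_one_mul]
  exact Ideal.mul_mem_pow_succ (of_sub_one_mem_relAugIdeal _)
    (of_sub_one_mem_relAugIdeal_pow_two hk) two_ne_zero

end GroupAlgebra

theorem stmt13_general (n m l : ℕ)
    (S : Type) [CommRing S] (hchar : CharP S 4)
    (nn : Ideal S) (h2n : (2 : S) ∈ nn)
    (α β : S) :
    (α • elA S n m l + β • elB S n m l) ^ 4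
      - (α ^ 4 • elA S n m l ^ 4 + β ^ 4 • elB S n m l ^ 4
          + (α ^ 2 * β ^ 2) • elC S n m l ^ 2)
      ∈ relAugIdeal S nn (GrpH n m l) ^ 5 := by
  have h4 : (4 : MonoidAlgebra S (GrpH n m l)) = 0 := by
    have h4S : (4 : S) = 0 := by exact_mod_cast CharP.cast_eq_zero S 4
    rw [← map_ofNat (algebraMap S _) 4, h4S, map_zero]
  exact smul_add_smul_pow_four_sub_mem h4 (two_mem_relAugIdeal h2n)
    (of_sub_one_mem_relAugIdeal _) (of_sub_one_mem_relAugIdeal _)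
    (of_sub_one_mem_relAugIdeal_pow_two GrpH.b_mul_a)
    (of_sub_one_mul_of_sub_one_sub_sub_mem_pow_three GrpH.b_mul_a)
    (commute_of_sub_one_sq_add_two_mul GrpH.commute_a_sq_b)
    (commute_of_sub_one_sq_add_two_mul GrpH.commute_b_sq_a) α β

theorem stmt13 (n m l : ℕ) (h1 : n > m) (h2 : m > l) (h3 : 2 ≤ l)
    (S : Type) [CommRing S] (hchar : CharP S 4)
    (nn : Ideal S) (hnn : nn.IsMaximal) (h2n : (2 : S) ∈ nn) (h2n2 : (2 : S) ∉ nn ^ 2)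
    (α β : S) :
    (α • elA S n m l + β • elB S n m l) ^ 4
      - (α ^ 4 • elA S n m l ^ 4 + β ^ 4 • elB S n m l ^ 4
          + (α ^ 2 * β ^ 2) • elC S n m l ^ 2)
      ∈ relAugIdeal S nn (GrpH n m l) ^ 5 :=
  stmt13_general n m l S hchar nn h2n α β
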